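/- arXiv:math/0508045 — 5 statements merged into one kernel-verified Lean document; each statement's English description precedes it below -/
import Mathlib

section
/- For λ ∈ (0,1), the Jacobian determinant of F_λ at any z ≠ 0 equals 2λ(λ + (1-λ)|z|⁻¹). In particular, if λ ∈ (2^{-1/2}, 1), then Jac(F_λ)(z) > 2λ² > 1 for all z ≠ 0. -/
/-! In polar coordinates `F_λ` is `r e^{iθ} ↦ ρ(r) e^{2iθ} + 1` with `ρ(r) = 1 - λ + λ r`, and
`e^{2iθ} = z / z̄`. The real derivative of `z ↦ ρ(|z|) z / z̄` has the form `h ↦ a h + b h̄` with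
`|a| = ρ'/2 + ρ/r` and `|b| = |ρ'/2 - ρ/r|`, so its Jacobian `|a|² - |b|²` is `2 ρ' ρ / r`. -/

noncomputable def Fl (l : ℝ) (z : ℂ) : ℂ :=
  ((1 - l + l * ‖z‖ : ℝ) : ℂ) * (z / (‖z‖ : ℂ)) ^ 2 + 1

theorem hasFDerivAt_norm_of_ne_zero {E : Type*} [NormedAddCommGroup E] [InnerProductSpace ℝ E]
    {x : E} (hx : x ≠ 0) : HasFDerivAt (‖·‖) (‖x‖⁻¹ • innerSL ℝ x) x := by
  have h := (hasFDerivAt_id x).norm_sq.sqrt (by simpa using hx)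
  simp only [id, Real.sqrt_sq (norm_nonneg _)] at h
  refine h.congr_fderiv ?_
  ext v
  simp
  field_simp

open ComplexConjugate

namespace Complex

noncomputable def mulAddConjCLM (a b : ℂ) : ℂ →L[ℝ] ℂ :=
  a • ContinuousLinearMap.id ℝ ℂ + b • (conjCLE : ℂ →L[ℝ] ℂ)

@[simp]
theorem mulAddConjCLM_apply (a b h : ℂ) : mulAddConjCLM a b h = a * h + b * conj h := rfl

theorem det_mulAddConjCLM (a b : ℂ) :
    LinearMap.det (mulAddConjCLM a b : ℂ →ₗ[ℝ] ℂ) = normSq a - normSq b := by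
  rw [← LinearMap.det_toMatrix basisOneI, Matrix.det_fin_two]
  simp [LinearMap.toMatrix_apply, normSq_apply]
  ring

theorem ofRealCLM_comp_innerSL (z : ℂ) :
    ofRealCLM ∘L innerSL ℝ z = mulAddConjCLM (conj z / 2) (z / 2) := by
  ext h
  apply Complex.ext <;> simp <;> ring

theorem div_norm_sq_eq_div_conj (z : ℂ) : (z / ‖z‖) ^ 2 = z / conj z := by
  rcases eq_or_ne z 0 with rfl | hz
  · simp
  rw [div_pow, ← ofReal_pow, ← normSq_eq_norm_sq, ← mul_conj]
  field_simp

theorem hasFDerivAt_div_conj {z : ℂ} (hz : z ≠ 0) :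
    HasFDerivAt (fun w => w / conj w) (mulAddConjCLM (conj z)⁻¹ (-(z / conj z ^ 2))) z := by
  have hinv := (hasDerivAt_inv ((map_ne_zero conj).mpr hz)).comp_hasFDerivAt z
    (conjCLE : ℂ →L[ℝ] ℂ).hasFDerivAt
  refine ((hasFDerivAt_id z).fun_mul hinv).congr_fderiv ?_
  ext h
  simp
  ring

theorem hasFDerivAt_smul_div_conj {ρ : ℝ → ℝ} {ρ' : ℝ} {z : ℂ} (hz : z ≠ 0)
    (hρ : HasDerivAt ρ ρ' ‖z‖) :
    HasFDerivAt (fun w => ρ ‖w‖ • (w / conj w))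
      (mulAddConjCLM ((ρ' / (2 * ‖z‖) + ρ ‖z‖ / ‖z‖ ^ 2) • z)
        ((ρ' / (2 * ‖z‖) - ρ ‖z‖ / ‖z‖ ^ 2) • (z ^ 2 / conj z))) z := by
  refine ((hρ.comp_hasFDerivAt z (hasFDerivAt_norm_of_ne_zero hz)).fun_smul
    (hasFDerivAt_div_conj hz)).congr_fderiv ?_
  have hinner (h : ℂ) : ((inner ℝ z h : ℝ) : ℂ) = conj z / 2 * h + z / 2 * conj h := by
    simpa using DFunLike.congr_fun (ofRealCLM_comp_innerSL z) h
  have hnorm : ((‖z‖ : ℝ) : ℂ) ^ 2 = z * conj z := by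
    rw [mul_conj, normSq_eq_norm_sq, ofReal_pow]
  have hz' : conj z ≠ 0 := (map_ne_zero conj).mpr hz
  have hr : ((‖z‖ : ℝ) : ℂ) ≠ 0 := ofReal_ne_zero.mpr (norm_ne_zero_iff.mpr hz)
  ext h
  simp only [add_apply, FunLike.coe_smul, Function.comp_apply, Pi.smul_apply,
    ContinuousLinearMap.smulRight_apply, innerSL_apply_apply, mulAddConjCLM_apply, smul_eq_mul,
    real_smul]
  push_cast
  rw [hinner]
  field_simp
  linear_combination 2 * (ρ ‖z‖ : ℂ) * (conj z * h - z * conj h) * hnorm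

theorem exists_hasFDerivAt_smul_div_conj_and_det_eq {ρ : ℝ → ℝ} {ρ' : ℝ} {z : ℂ} (hz : z ≠ 0)
    (hρ : HasDerivAt ρ ρ' ‖z‖) :
    ∃ L : ℂ →L[ℝ] ℂ, HasFDerivAt (fun w => ρ ‖w‖ • (w / conj w)) L z ∧
      LinearMap.det (L : ℂ →ₗ[ℝ] ℂ) = 2 * ρ' * ρ ‖z‖ / ‖z‖ := by
  refine ⟨_, hasFDerivAt_smul_div_conj hz hρ, ?_⟩
  simp only [det_mulAddConjCLM, real_smul, normSq_eq_norm_sq, norm_mul, norm_real, norm_div,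
    norm_conj, norm_pow, Real.norm_eq_abs, mul_pow, sq_abs]
  field_simp
  ring

end Complex

open Complex

theorem Fl_eq_smul_div_conj (l : ℝ) : Fl l = fun w => (1 - l + l * ‖w‖) • (w / conj w) + 1 := by
  ext1 w
  rw [Fl, div_norm_sq_eq_div_conj, real_smul]

theorem one_lt_two_mul_sq_of_rpow_lt {l : ℝ} (hl : (2 : ℝ) ^ (-(2 : ℝ)⁻¹) < l) :
    1 < 2 * l ^ 2 := by
  have hpos : (0 : ℝ) < 2 ^ (-(2 : ℝ)⁻¹) := by positivity
  have hsq : ((2 : ℝ) ^ (-(2 : ℝ)⁻¹)) ^ 2 = 2⁻¹ := by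
    rw [← Real.rpow_natCast, ← Real.rpow_mul zero_le_two]
    norm_num
  nlinarith [pow_lt_pow_left₀ hl hpos.le two_ne_zero]

theorem stmt_2_general (l : ℝ) (z : ℂ) (hz : z ≠ 0) :
    (∃ L : ℂ →L[ℝ] ℂ, HasFDerivAt (Fl l) L z ∧
      LinearMap.det (L : ℂ →ₗ[ℝ] ℂ) = 2 * l * (l + (1 - l) * (‖z‖)⁻¹)) ∧
    (l ∈ Set.Ioo ((2 : ℝ) ^ (-(2 : ℝ)⁻¹)) 1 →
      2 * l * (l + (1 - l) * (‖z‖)⁻¹) > 2 * l ^ 2 ∧ 2 * l ^ 2 > 1) := by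
  have hr : 0 < ‖z‖ := norm_pos_iff.mpr hz
  constructor
  · have hρ : HasDerivAt (fun t => 1 - l + l * t) l ‖z‖ := by
      simpa using ((hasDerivAt_id ‖z‖).const_mul l).const_add (1 - l)
    obtain ⟨L, hL, hdet⟩ := exists_hasFDerivAt_smul_div_conj_and_det_eq hz hρ
    refine ⟨L, Fl_eq_smul_div_conj l ▸ hL.add_const 1, ?_⟩
    rw [hdet]
    field_simp
    ring
  · rintro ⟨hlow, hl1⟩
    have hl0 : 0 < l := (Real.rpow_pos_of_pos two_pos _).trans hlow
    have hgap : 0 < 2 * l * ((1 - l) * ‖z‖⁻¹) := by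
      have := sub_pos.mpr hl1
      positivity
    exact ⟨by linarith, one_lt_two_mul_sq_of_rpow_lt hlow⟩

/-- The Jacobian determinant of F_λ at z ≠ 0 equals 2λ(λ + (1-λ)|z|⁻¹); and if
λ ∈ (2^{-1/2}, 1) then this quantity is > 2λ² > 1. -/
theorem stmt_2 (l : ℝ) (hl : l ∈ Set.Ioo (0 : ℝ) 1) (z : ℂ) (hz : z ≠ 0) :
    (∃ L : ℂ →L[ℝ] ℂ, HasFDerivAt (Fl l) L z ∧
      LinearMap.det (L : ℂ →ₗ[ℝ] ℂ) = 2 * l * (l + (1 - l) * (‖z‖)⁻¹)) ∧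
    (l ∈ Set.Ioo ((2 : ℝ) ^ (-(2 : ℝ)⁻¹)) 1 →
      2 * l * (l + (1 - l) * (‖z‖)⁻¹) > 2 * l ^ 2 ∧ 2 * l ^ 2 > 1) :=
  stmt_2_general l z hz
end

section
/- Set ε₀ = (1/2)√(1-λ). For every z₀ ∈ ℂ with |z₀| ≥ 1 and every tangent vector v = ρ z₀ (1 + iε) with ρ ≥ 0 and |ε| ≤ ε₀, one has |D_{z₀}F_λ(v)|² ≤ λ̃ |v|², where λ̃ = (λ² + 4ε₀²)/(1 + ε₀²). Moreover, if λ is sufficiently close to 1 then λ̃ ∈ (0,1). -/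
/-!
Write `r = |z₀|` and `c = 1 - λ + λr`, so that `|F_λ(z₀) - 1| = c` and `1 ≤ c ≤ r`. For
`v = ρz₀(1 + iε)` the squared norms are `|D_{z₀}F_λ(v)|² = ρ²(λ²r² + 4c²ε²) ≤ ρ²r²(λ² + 4ε²)` and
`|v|² = ρ²r²(1 + ε²)`, and the ratio `(λ² + 4t)/(1 + t)` is increasing in `t`, so it is largest
on the boundary `ε² = ε₀²` of the cone. With `ε₀² = (1 - λ)/4` the resulting rate is below `1`
exactly when `λ > 1/4`.
-/

open Complex

lemma norm_Fl_sub_one (l : ℝ) {z : ℂ} (hz : z ≠ 0) :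
    ‖Fl l z - 1‖ = |1 - l + l * ‖z‖| := by
  have hr : ‖z‖ ≠ 0 := norm_ne_zero_iff.mpr hz
  simp only [Fl, add_sub_cancel_right, norm_mul, norm_pow, norm_div, norm_real, Real.norm_eq_abs,
    abs_norm, div_self hr, one_pow, mul_one]

lemma norm_sq_ofReal_add_two_mul_I (x y : ℝ) :
    ‖(x : ℂ) + 2 * (y : ℂ) * I‖ ^ 2 = x ^ 2 + 4 * y ^ 2 := by
  have h : (x : ℂ) + 2 * (y : ℂ) * I = (x : ℂ) + ((2 * y : ℝ) : ℂ) * I := by push_cast; ring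
  rw [h, Complex.sq_norm, normSq_add_mul_I]
  ring

lemma norm_sq_mul_one_add_mul_I (ρ ε : ℝ) (z : ℂ) :
    ‖(ρ : ℂ) * z * (1 + (ε : ℂ) * I)‖ ^ 2 = ρ ^ 2 * ‖z‖ ^ 2 * (1 + ε ^ 2) := by
  have h : (1 + (ε : ℂ) * I) = ((1 : ℝ) : ℂ) + (ε : ℂ) * I := by push_cast; ring
  rw [norm_mul, norm_mul, mul_pow, mul_pow, h, Complex.sq_norm (_ + _), normSq_add_mul_I, norm_real,
    Real.norm_eq_abs, sq_abs, one_pow]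

lemma add_four_mul_div_one_add_le {a t s : ℝ} (ha : a ≤ 4) (ht : 0 ≤ t) (hts : t ≤ s) :
    (a + 4 * t) / (1 + t) ≤ (a + 4 * s) / (1 + s) := by
  rw [div_le_div_iff₀ (by linarith) (by linarith)]
  nlinarith

lemma one_sub_add_mul_le_self {l r : ℝ} (hl : l ≤ 1) (hr : 1 ≤ r) : 1 - l + l * r ≤ r := by
  nlinarith

lemma one_le_one_sub_add_mul {l r : ℝ} (hl : 0 ≤ l) (hr : 1 ≤ r) : 1 ≤ 1 - l + l * r := by
  nlinarith

lemma norm_sq_derivative_eq {l ρ ε : ℝ} {z₀ : ℂ} (hz₀ : z₀ ≠ 0) (hc : 1 - l + l * ‖z₀‖ ≠ 0) :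
    ‖(Fl l z₀ - 1) * (((ρ * l * ‖z₀‖ / (1 - l + l * ‖z₀‖) : ℝ) : ℂ) + 2 * ((ρ * ε : ℝ) : ℂ) * I)‖ ^ 2
      = ρ ^ 2 * (l ^ 2 * ‖z₀‖ ^ 2 + 4 * (1 - l + l * ‖z₀‖) ^ 2 * ε ^ 2) := by
  rw [norm_mul, mul_pow, norm_Fl_sub_one l hz₀, sq_abs, norm_sq_ofReal_add_two_mul_I]
  field_simp

lemma half_sqrt_one_sub_sq {l : ℝ} (hl : l ≤ 1) : (Real.sqrt (1 - l) / 2) ^ 2 = (1 - l) / 4 := by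
  rw [div_pow, Real.sq_sqrt (by linarith)]
  norm_num

lemma contraction_rate_mem_Ioo {l : ℝ} (hl : l ∈ Set.Ioo (1 / 4 : ℝ) 1) :
    (l ^ 2 + 4 * ((1 - l) / 4)) / (1 + (1 - l) / 4) ∈ Set.Ioo (0 : ℝ) 1 := by
  obtain ⟨hl₀, hl₁⟩ := hl
  have hd : (0 : ℝ) < 1 + (1 - l) / 4 := by linarith
  refine ⟨div_pos (by nlinarith) hd, (div_lt_one hd).mpr ?_⟩
  nlinarith

/-- The derivative of F_λ contracts vectors in the stable cone over {|z₀| ≥ 1}: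
for v = ρz₀(1+iε) with ρ ≥ 0 and |ε| ≤ ε₀ = (1/2)√(1-λ) we have
|D_{z₀}F_λ(v)|² ≤ λ̃|v|² where λ̃ = (λ² + 4ε₀²)/(1 + ε₀²); moreover for λ
sufficiently close to 1, λ̃ ∈ (0,1). -/
theorem stmt_4 :
    (∀ l ∈ Set.Ioo (0 : ℝ) 1, ∀ z₀ : ℂ, 1 ≤ ‖z₀‖ →
      ∀ ρ ε : ℝ, 0 ≤ ρ → |ε| ≤ Real.sqrt (1 - l) / 2 →
        ‖(Fl l z₀ - 1) *
            (((ρ * l * ‖z₀‖ / (1 - l + l * ‖z₀‖) : ℝ) : ℂ)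
              + 2 * ((ρ * ε : ℝ) : ℂ) * Complex.I)‖ ^ 2 ≤
          ((l ^ 2 + 4 * (Real.sqrt (1 - l) / 2) ^ 2) / (1 + (Real.sqrt (1 - l) / 2) ^ 2)) *
            ‖(ρ : ℂ) * z₀ * (1 + (ε : ℂ) * Complex.I)‖ ^ 2) ∧
    (∃ l₁ ∈ Set.Ioo (0 : ℝ) 1, ∀ l ∈ Set.Ioo l₁ 1,
      (l ^ 2 + 4 * (Real.sqrt (1 - l) / 2) ^ 2) / (1 + (Real.sqrt (1 - l) / 2) ^ 2)
        ∈ Set.Ioo (0 : ℝ) 1) := by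
  refine ⟨fun l ⟨hl₀, hl₁⟩ z₀ hz₀ ρ ε _ hε => ?_, ⟨1 / 2, by norm_num, fun l ⟨hl, hl₁⟩ => ?_⟩⟩
  · set r := ‖z₀‖
    set ε₀ := Real.sqrt (1 - l) / 2
    have hc₁ := one_le_one_sub_add_mul hl₀.le hz₀
    have hcr := one_sub_add_mul_le_self hl₁.le hz₀
    rw [norm_sq_derivative_eq (norm_pos_iff.mp (by linarith)) (by linarith),
      norm_sq_mul_one_add_mul_I]
    have hrate := add_four_mul_div_one_add_le (a := l ^ 2) (by nlinarith) (sq_nonneg ε)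
      (sq_le_sq' (abs_le.mp hε).1 (abs_le.mp hε).2)
    calc ρ ^ 2 * (l ^ 2 * r ^ 2 + 4 * (1 - l + l * r) ^ 2 * ε ^ 2)
        ≤ ρ ^ 2 * r ^ 2 * (l ^ 2 + 4 * ε ^ 2) := by
          have : (1 - l + l * r) ^ 2 ≤ r ^ 2 := pow_le_pow_left₀ (by linarith) hcr 2
          nlinarith [mul_nonneg (sq_nonneg ρ) (sq_nonneg ε)]
      _ = ρ ^ 2 * r ^ 2 * (1 + ε ^ 2) * ((l ^ 2 + 4 * ε ^ 2) / (1 + ε ^ 2)) := by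
          field_simp
      _ ≤ ρ ^ 2 * r ^ 2 * (1 + ε ^ 2) * ((l ^ 2 + 4 * ε₀ ^ 2) / (1 + ε₀ ^ 2)) :=
          mul_le_mul_of_nonneg_left hrate (by positivity)
      _ = _ := by ring
  · rw [half_sqrt_one_sub_sq hl₁.le]
    exact contraction_rate_mem_Ioo ⟨by linarith, hl₁⟩
end

section
/- For every z₀ ∈ ℂ \ {0} and every vector v = z₀(i + ε)ρ with ρ ≥ 0 and |ε| ≤ 1, one has |D_{z₀}F_λ(v)| ≥ λ√(5/2) · |v|. -/
/-!
Writing `v = z₀ (a + b i)` with `a = ρε`, `b = ρ`, the derivative is `(F_λ(z₀) - 1)(κ a + 2b i)`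
with `κ = λ|z₀| / (1 - λ + λ|z₀|) ∈ [0, 1]` and `|F_λ(z₀) - 1| = 1 - λ + λ|z₀|`. Shrinking the real
part by `κ` shrinks the norm by at most `κ`, so `|D v| ≥ λ|z₀| |a + 2b i|`. On the cone `|a| ≤ |b|`,
doubling the imaginary part stretches by at least `√(5/2)`, because `5/2 (a² + b²) ≤ a² + 4b²`
there; and `|v| = |z₀| |a + b i|`.
-/

open Complex

lemma abs_mul_norm_le_norm_ofReal_mul_add_mul_I {κ : ℝ} (hκ : |κ| ≤ 1) (a b : ℝ) :
    |κ| * ‖(a : ℂ) + b * I‖ ≤ ‖((κ * a : ℝ) : ℂ) + b * I‖ := by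
  rw [norm_add_mul_I, norm_add_mul_I, ← Real.sqrt_sq (abs_nonneg κ), ← Real.sqrt_mul (sq_nonneg _),
    sq_abs]
  apply Real.sqrt_le_sqrt
  have hκ2 : κ ^ 2 ≤ 1 := by
    rw [← sq_abs]
    exact pow_le_one₀ (abs_nonneg κ) hκ
  nlinarith [mul_le_mul_of_nonneg_right hκ2 (sq_nonneg b)]

lemma sqrt_five_div_two_mul_norm_le_norm_add_two_mul_I {a b : ℝ} (h : |a| ≤ |b|) :
    √(5 / 2) * ‖(a : ℂ) + b * I‖ ≤ ‖(a : ℂ) + 2 * b * I‖ := by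
  have h2b : (2 * b : ℂ) = ((2 * b : ℝ) : ℂ) := by push_cast; ring
  rw [h2b, norm_add_mul_I, norm_add_mul_I, ← Real.sqrt_mul (by norm_num)]
  apply Real.sqrt_le_sqrt
  nlinarith [sq_le_sq.mpr h]

theorem stmt_5_general (l : ℝ) (hl : l ∈ Set.Ioo (0 : ℝ) 1) (z₀ : ℂ) (hz : z₀ ≠ 0)
    (ρ ε : ℝ) (hε : |ε| ≤ 1) :
    l * Real.sqrt (5 / 2) * ‖(ρ : ℂ) * z₀ * (Complex.I + (ε : ℂ))‖ ≤
      ‖(Fl l z₀ - 1) *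
        (((ρ * ε * l * ‖z₀‖ / (1 - l + l * ‖z₀‖) : ℝ) : ℂ)
          + 2 * (ρ : ℂ) * Complex.I)‖ := by
  obtain ⟨hl0, hl1⟩ := hl
  have hr : 0 < ‖z₀‖ := norm_pos_iff.mpr hz
  set c := 1 - l + l * ‖z₀‖
  have hlr : 0 < l * ‖z₀‖ := mul_pos hl0 hr
  have hc : 0 < c := by linarith
  have hκ : |l * ‖z₀‖ / c| ≤ 1 := by
    rw [abs_of_pos (div_pos hlr hc), div_le_one hc]
    linarith
  have hρε : |ρ * ε| ≤ |ρ| := by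
    rw [abs_mul]
    exact mul_le_of_le_one_right (abs_nonneg ρ) hε
  have hv : (ρ : ℂ) * z₀ * (I + ε) = z₀ * (((ρ * ε : ℝ) : ℂ) + ρ * I) := by push_cast; ring
  have hw : ρ * ε * l * ‖z₀‖ / c = l * ‖z₀‖ / c * (ρ * ε) := by ring
  have h2ρ : (2 * ρ : ℂ) = ((2 * ρ : ℝ) : ℂ) := by push_cast; ring
  rw [hv, norm_mul, norm_mul, norm_Fl_sub_one l hz, hw, h2ρ]
  calc l * √(5 / 2) * (‖z₀‖ * ‖((ρ * ε : ℝ) : ℂ) + ρ * I‖)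
      = l * ‖z₀‖ * (√(5 / 2) * ‖((ρ * ε : ℝ) : ℂ) + ρ * I‖) := by ring
    _ ≤ l * ‖z₀‖ * ‖((ρ * ε : ℝ) : ℂ) + ((2 * ρ : ℝ) : ℂ) * I‖ := by
        gcongr
        rw [← h2ρ]
        exact sqrt_five_div_two_mul_norm_le_norm_add_two_mul_I hρε
    _ = |c| * (|l * ‖z₀‖ / c| * ‖((ρ * ε : ℝ) : ℂ) + ((2 * ρ : ℝ) : ℂ) * I‖) := by
        rw [abs_of_pos hc, abs_of_pos (div_pos hlr hc)]
        field_simp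
    _ ≤ _ := by
        gcongr
        exact abs_mul_norm_le_norm_ofReal_mul_add_mul_I hκ _ _

/-- Expansion in the wide unstable cone: for v = ρz₀(i + ε), ρ ≥ 0, |ε| ≤ 1,
|D_{z₀}F_λ(v)| ≥ λ√(5/2)·|v|, where D_{z₀}F_λ(z₀(a+ib)) =
(F_λ(z₀)-1)(aλ|z₀|/(1-λ+λ|z₀|) + 2bi). -/
theorem stmt_5 (l : ℝ) (hl : l ∈ Set.Ioo (0 : ℝ) 1) (z₀ : ℂ) (hz : z₀ ≠ 0)
    (ρ ε : ℝ) (hρ : 0 ≤ ρ) (hε : |ε| ≤ 1) :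
    l * Real.sqrt (5 / 2) * ‖(ρ : ℂ) * z₀ * (Complex.I + (ε : ℂ))‖ ≤
      ‖(Fl l z₀ - 1) *
        (((ρ * ε * l * ‖z₀‖ / (1 - l + l * ‖z₀‖) : ℝ) : ℂ)
          + 2 * (ρ : ℂ) * Complex.I)‖ :=
  stmt_5_general l hl z₀ hz ρ ε hε
end

section
/- Let Q⁺ = {z : Re z ≤ 0, Im z ≥ 0} and Q⁻ = {z : Re z ≤ 0, Im z ≤ 0}. If z' ∈ Q⁺ \ {0} and z = F_λ(z') ∈ Q⁻, then |z' - 1| ≥ √2. -/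
/-! If `Re z' ≤ 0`, then `|z' - 1|² ≥ |z'|² + 1`, so `|z' - 1| < √2` would force `|z'| < 1`.
But for `|z'| < 1` the point `F_λ(z')` lies in the open disc of radius `1 - λ + λ|z'| < 1`
around `1`, hence in the right half-plane, so it cannot lie in `Q⁻`. -/

namespace Complex

theorem sq_norm_add_one_le_sq_norm_sub_one {z : ℂ} (hz : z.re ≤ 0) :
    ‖z‖ ^ 2 + 1 ≤ ‖z - 1‖ ^ 2 := by
  rw [Complex.sq_norm, Complex.sq_norm, normSq_sub]
  simp only [map_one, mul_one]
  linarith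

theorem re_pos_of_norm_sub_one_lt_one {w : ℂ} (hw : ‖w - 1‖ < 1) : 0 < w.re := by
  have := abs_re_le_norm (w - 1)
  rw [sub_re, one_re] at this
  linarith [neg_abs_le (w.re - 1)]

end Complex

theorem norm_Fl_sub_one_le (l : ℝ) (z : ℂ) : ‖Fl l z - 1‖ ≤ |1 - l + l * ‖z‖| := by
  -- `≤` rather than `=`: at `z = 0` the direction `z / ‖z‖` is the junk value `0`.
  have hdir : ‖z / (‖z‖ : ℂ)‖ ≤ 1 := by
    rw [norm_div, Complex.norm_real, norm_norm]
    exact div_self_le_one _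
  rw [Fl, add_sub_cancel_right, norm_mul, norm_pow, Complex.norm_real, Real.norm_eq_abs]
  exact mul_le_of_le_one_right (abs_nonneg _) (pow_le_one₀ (norm_nonneg _) hdir)

theorem re_Fl_pos {l : ℝ} (hl₀ : 0 < l) (hl₁ : l ≤ 1) {z : ℂ} (hz : ‖z‖ < 1) :
    0 < (Fl l z).re := by
  refine Complex.re_pos_of_norm_sub_one_lt_one ((norm_Fl_sub_one_le l z).trans_lt ?_)
  rw [abs_of_nonneg (by nlinarith [norm_nonneg z])]
  nlinarith

theorem stmt_10_general (l : ℝ) (hl : l ∈ Set.Ioo (0 : ℝ) 1) (z' : ℂ)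
    (hre : z'.re ≤ 0)
    (hre' : (Fl l z').re ≤ 0) :
    Real.sqrt 2 ≤ ‖z' - 1‖ := by
  have hz' : 1 ≤ ‖z'‖ := by
    by_contra! h
    exact (re_Fl_pos hl.1 hl.2.le h).not_ge hre'
  rw [Real.sqrt_le_left (norm_nonneg _)]
  nlinarith [Complex.sq_norm_add_one_le_sq_norm_sub_one hre]

/-- If z' ∈ Q⁺ \ {0} (Re z' ≤ 0, Im z' ≥ 0) and F_λ(z') ∈ Q⁻ (Re ≤ 0, Im ≤ 0),
then |z' - 1| ≥ √2. -/
theorem stmt_10 (l : ℝ) (hl : l ∈ Set.Ioo (0 : ℝ) 1) (z' : ℂ) (hz : z' ≠ 0)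
    (hre : z'.re ≤ 0) (him : 0 ≤ z'.im)
    (hre' : (Fl l z').re ≤ 0) (him' : (Fl l z').im ≤ 0) :
    Real.sqrt 2 ≤ ‖z' - 1‖ :=
  stmt_10_general l hl z' hre hre'
end

section
/- For any two points z, z' ∈ ℂ \ {0} with arg(z), arg(z') ∈ [0, π/2], one has |G(z) - G(z')| ≥ |z - z'|, with equality if and only if z/z' is real (i.e. z and z' have the same argument). -/
/-!
Write `p = z * conj z'`. Since `z ↦ z² / |z|` preserves moduli,
`|G z - G z'|² - |z - z'|² = 2 (Re p - Re (p²) / |p|)`. With `x = Re p` and `ρ = |p|` we have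
`ρ (Re p - Re (p²) / |p|) = ρ x - (2x² - ρ²) = (ρ - x)(ρ + 2x)`, which is nonnegative as soon as
`x ≥ 0`, and this holds when `z` and `z'` both lie in the closed first quadrant. Equality forces
`x = ρ`, i.e. `Im p = 0`, which is `Im (z / z') = 0`.
-/

noncomputable def Gd (z : ℂ) : ℂ := z ^ 2 / (‖z‖ : ℂ) + 1

open Complex ComplexConjugate

namespace Complex

theorem re_nonneg_and_im_nonneg_of_arg_mem_Icc {z : ℂ} (h : arg z ∈ Set.Icc 0 (Real.pi / 2)) :
    0 ≤ z.re ∧ 0 ≤ z.im := by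
  have him : 0 ≤ z.im := arg_nonneg_iff.mp h.1
  exact ⟨(arg_le_pi_div_two_iff.mp h.2).resolve_right him.not_gt, him⟩

theorem re_mul_conj_nonneg {z w : ℂ} (hz : 0 ≤ z.re ∧ 0 ≤ z.im) (hw : 0 ≤ w.re ∧ 0 ≤ w.im) :
    0 ≤ (z * conj w).re := by
  simp only [mul_re, conj_re, conj_im, mul_neg, sub_neg_eq_add]
  exact add_nonneg (mul_nonneg hz.1 hw.1) (mul_nonneg hz.2 hw.2)

theorem div_im_eq_zero_iff (z w : ℂ) : (z / w).im = 0 ↔ (z * conj w).im = 0 := by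
  rcases eq_or_ne w 0 with rfl | hw
  · simp
  have : (z / w).im = (z * conj w).im / normSq w := by
    rw [div_im, mul_im, conj_re, conj_im]
    ring
  rw [this, div_eq_zero_iff, or_iff_left (normSq_pos.mpr hw).ne']

theorem normSq_sq_div_norm (z : ℂ) : normSq (z ^ 2 / ‖z‖) = normSq z := by
  rcases eq_or_ne z 0 with rfl | hz
  · simp
  have hn : ‖z‖ ≠ 0 := norm_ne_zero_iff.mpr hz
  rw [normSq_div, normSq_ofReal, map_pow, ← Complex.sq_norm]
  field_simp

theorem normSq_sq_div_norm_sub (z w : ℂ) :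
    normSq (z ^ 2 / ‖z‖ - w ^ 2 / ‖w‖) =
      normSq z + normSq w - 2 * ((z * conj w) ^ 2).re / ‖z * conj w‖ := by
  have hcross : z ^ 2 / ‖z‖ * conj (w ^ 2 / ‖w‖) = (z * conj w) ^ 2 / ((‖z‖ * ‖w‖ : ℝ) : ℂ) := by
    rw [map_div₀, conj_ofReal, map_pow]
    push_cast
    ring
  rw [normSq_sub, normSq_sq_div_norm, normSq_sq_div_norm, hcross, div_ofReal_re, norm_mul,
    norm_conj, mul_div_assoc]

theorem re_sq_eq (p : ℂ) : (p ^ 2).re = 2 * p.re ^ 2 - ‖p‖ ^ 2 := by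
  rw [Complex.sq_norm, normSq_apply, sq, mul_re]
  ring

theorem re_sq_div_norm_le {p : ℂ} (hp : 0 ≤ p.re) : (p ^ 2).re / ‖p‖ ≤ p.re := by
  rcases eq_or_ne p 0 with rfl | hp0
  · simp
  rw [div_le_iff₀ (norm_pos_iff.mpr hp0), re_sq_eq]
  nlinarith [mul_nonneg (sub_nonneg.mpr (re_le_norm p)) (by positivity : 0 ≤ ‖p‖ + 2 * p.re)]

theorem re_sq_div_norm_eq_iff {p : ℂ} (hp : 0 ≤ p.re) : (p ^ 2).re / ‖p‖ = p.re ↔ p.im = 0 := by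
  rcases eq_or_ne p 0 with rfl | hp0
  · simp
  have hρ : 0 < ‖p‖ := norm_pos_iff.mpr hp0
  rw [div_eq_iff hρ.ne', re_sq_eq, ← sq_eq_zero_iff, ← sq_norm_sub_sq_re]
  calc 2 * p.re ^ 2 - ‖p‖ ^ 2 = p.re * ‖p‖ ↔ (‖p‖ - p.re) * (‖p‖ + 2 * p.re) = 0 := by
        constructor <;> intro h <;> linear_combination -h
    _ ↔ ‖p‖ - p.re = 0 := mul_eq_zero_iff_right (by positivity)
    _ ↔ (‖p‖ - p.re) * (‖p‖ + p.re) = 0 := (mul_eq_zero_iff_right (by positivity)).symm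
    _ ↔ ‖p‖ ^ 2 - p.re ^ 2 = 0 := by ring_nf

end Complex

theorem stmt_15_general (z z' : ℂ)
    (ha : Complex.arg z ∈ Set.Icc 0 (Real.pi / 2))
    (ha' : Complex.arg z' ∈ Set.Icc 0 (Real.pi / 2)) :
    ‖z - z'‖ ≤ ‖Gd z - Gd z'‖ ∧
      (‖Gd z - Gd z'‖ = ‖z - z'‖ ↔ (z / z').im = 0) := by
  set p := z * conj z'
  have hp : 0 ≤ p.re := re_mul_conj_nonneg (re_nonneg_and_im_nonneg_of_arg_mem_Icc ha)
    (re_nonneg_and_im_nonneg_of_arg_mem_Icc ha')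
  have hG : ‖Gd z - Gd z'‖ ^ 2 = ‖z - z'‖ ^ 2 + 2 * (p.re - (p ^ 2).re / ‖p‖) := by
    rw [Gd, Gd, add_sub_add_right_eq_sub, Complex.sq_norm, Complex.sq_norm,
      normSq_sq_div_norm_sub, normSq_sub]
    ring
  constructor
  · refine (sq_le_sq₀ (norm_nonneg _) (norm_nonneg _)).mp ?_
    linarith [re_sq_div_norm_le hp]
  · rw [div_im_eq_zero_iff, ← re_sq_div_norm_eq_iff hp,
      ← sq_eq_sq₀ (norm_nonneg _) (norm_nonneg _), hG]
    constructor <;> intro h <;> linarith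

/-- For z, z' ≠ 0 with arguments in [0, π/2], |G(z) - G(z')| ≥ |z - z'|, with
equality if and only if z/z' is real. -/
theorem stmt_15 (z z' : ℂ) (hz : z ≠ 0) (hz' : z' ≠ 0)
    (ha : Complex.arg z ∈ Set.Icc 0 (Real.pi / 2))
    (ha' : Complex.arg z' ∈ Set.Icc 0 (Real.pi / 2)) :
    ‖z - z'‖ ≤ ‖Gd z - Gd z'‖ ∧
      (‖Gd z - Gd z'‖ = ‖z - z'‖ ↔ (z / z').im = 0) :=
  stmt_15_general z z' ha ha'
end
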